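/- arXiv:2004.10029 — 4 statements merged into one kernel-verified Lean document; each statement's English description precedes it below -/
import Mathlib

section
/- The function x(t) = ((e² + 2e⁴ - 2e²t)e^{-t} - 8 + (17 - 2e²)e^t)/8 satisfies the ODE x'(t) = x(t) + 1 - 10·u(t-1) on (1,2], where u(t-1) = (e^{3-(t-1)} - e^{1-(t-1)}(t-1))/20, with initial condition x(1) = -1 + 2e. -/
open Real

noncomputable section

-- `optimalControl` is the optimal `u` on `[0, 1)` and `optimalState` the trajectory `x` on `(1, 2]`,
-- where `x (t - 2) = 1`, so the delayed equation reads `x' = x + 1 - 10 u (t - 1)`.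
def optimalControl (t : ℝ) : ℝ :=
  (exp (3 - t) - exp (1 - t) * t) / 20

def optimalState (t : ℝ) : ℝ :=
  ((exp 2 + 2 * exp 4 - 2 * exp 2 * t) * exp (-t) - 8 + (17 - 2 * exp 2) * exp t) / 8

end

theorem hasDerivAt_affine_mul_exp_neg_add_mul_exp (a b c d k t : ℝ) :
    HasDerivAt (fun t : ℝ => ((a - b * t) * exp (-t) - c + d * exp t) / k)
      (((b * t - a - b) * exp (-t) + d * exp t) / k) t := by
  have hlin : HasDerivAt (fun t : ℝ => a - b * t) (-b) t := by
    simpa using ((hasDerivAt_id t).const_mul b).const_sub a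
  have hexp_neg : HasDerivAt (fun t : ℝ => exp (-t)) (-exp (-t)) t := by
    simpa using (hasDerivAt_neg t).exp
  refine (((hlin.mul hexp_neg).sub_const c).add ((hasDerivAt_exp t).const_mul d)).div_const k
    |>.congr_deriv ?_
  ring

theorem optimalState_deriv_eq_ode_rhs (t : ℝ) :
    ((2 * exp 2 * t - (exp 2 + 2 * exp 4) - 2 * exp 2) * exp (-t) + (17 - 2 * exp 2) * exp t) / 8
      = optimalState t + 1 - 10 * optimalControl (t - 1) := by
  have h4 : exp (3 - (t - 1)) = exp 4 * exp (-t) := by rw [← exp_add]; ring_nf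
  have h2 : exp (1 - (t - 1)) = exp 2 * exp (-t) := by rw [← exp_add]; ring_nf
  rw [optimalState, optimalControl, h4, h2]
  ring

theorem hasDerivAt_optimalState (t : ℝ) :
    HasDerivAt optimalState (optimalState t + 1 - 10 * optimalControl (t - 1)) t :=
  optimalState_deriv_eq_ode_rhs t ▸ hasDerivAt_affine_mul_exp_neg_add_mul_exp _ _ _ _ _ t

theorem optimalState_one : optimalState 1 = -1 + 2 * exp 1 := by
  have h2 : exp 2 = exp 1 ^ 2 := by rw [← exp_nat_mul]; norm_num
  have h4 : exp 4 = exp 1 ^ 4 := by rw [← exp_nat_mul]; norm_num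
  have hpos : exp 1 ≠ 0 := (exp_pos 1).ne'
  rw [optimalState, h2, h4, exp_neg]
  field_simp
  ring

theorem state_solves_ode_on_Ioc_1_2 :
    (∀ t ∈ Set.Ioc (1 : ℝ) 2,
      HasDerivAt
        (fun t : ℝ =>
          ((Real.exp 2 + 2 * Real.exp 4 - 2 * Real.exp 2 * t) * Real.exp (-t) - 8
            + (17 - 2 * Real.exp 2) * Real.exp t) / 8)
        (((Real.exp 2 + 2 * Real.exp 4 - 2 * Real.exp 2 * t) * Real.exp (-t) - 8
            + (17 - 2 * Real.exp 2) * Real.exp t) / 8 + 1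
          - 10 * ((Real.exp (3 - (t - 1)) - Real.exp (1 - (t - 1)) * (t - 1)) / 20)) t) ∧
    (((Real.exp 2 + 2 * Real.exp 4 - 2 * Real.exp 2 * 1) * Real.exp (-(1 : ℝ)) - 8
        + (17 - 2 * Real.exp 2) * Real.exp 1) / 8 = -1 + 2 * Real.exp 1) :=
  ⟨fun t _ => hasDerivAt_optimalState t, optimalState_one⟩
end

section
/- For each t ∈ [1,2], S(t,x) = η₂(t)x + c₂(t) with η₂(t) = -(4e²/(e²+1)² + 2)t + 4(e²-1)/(e²+1)² + 6 + (e^{2t-2} - e^{6-2t})/(e²+1)² and c₂(t) = (2t(3e⁴+10e²+3) + 2(e^{6-2t} - e^{2t-2}) - 17e⁴ - 44e² - 7)/(2(e²+1)²) satisfies ∂₁S(t, x₂*(t)) - (x₂*(t)² + u₂*(t)²) + ∂₂S(t, x₂*(t))·x₁*(t-1)·u₀*(t-2) = 0, where x₂*(t) = 1, u₂*(t) = 0, x₁*(t-1) = 1, u₀*(t-2) = 0. -/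
/-!
The exponential terms of `η₂` and `c₂` cancel, and the linear coefficients add up to
`-4e²/(e²+1)² - 2 + (3e⁴ + 10e² + 3)/(e²+1)² = 3 - 2 = 1`. Hence `S(t, 1) = η₂ t + c₂ t` is `t` plus a
constant, so `∂₁S = 1`, which is exactly the running cost `x₂*² + u₂*² = 1`; the delayed term
vanishes because `u₀* = 0`.
-/

open Real

noncomputable def hjSlope (t : ℝ) : ℝ :=
  -(4 * exp 2 / (exp 2 + 1) ^ 2 + 2) * t + 4 * (exp 2 - 1) / (exp 2 + 1) ^ 2 + 6
    + (exp (2 * t - 2) - exp (6 - 2 * t)) / (exp 2 + 1) ^ 2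

noncomputable def hjOffset (t : ℝ) : ℝ :=
  (2 * t * (3 * exp 4 + 10 * exp 2 + 3) + 2 * (exp (6 - 2 * t) - exp (2 * t - 2))
    - 17 * exp 4 - 44 * exp 2 - 7) / (2 * (exp 2 + 1) ^ 2)

theorem hjSlope_add_hjOffset (t : ℝ) :
    hjSlope t + hjOffset t = t - (5 * exp 4 + 12 * exp 2 + 3) / (2 * (exp 2 + 1) ^ 2) := by
  have hexp4 : exp 4 = exp 2 ^ 2 := by rw [← exp_nat_mul]; norm_num
  unfold hjSlope hjOffset
  rw [hexp4]
  field_simp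
  ring

theorem hasDerivAt_hjSlope_add_hjOffset (t : ℝ) :
    HasDerivAt (fun τ => hjSlope τ + hjOffset τ) 1 t := by
  simp only [hjSlope_add_hjOffset]
  exact (hasDerivAt_id t).sub_const _

open Real in
theorem HJ_equation_on_1_2
    (η₂ : ℝ → ℝ) (hη₂ : η₂ = fun t =>
      -(4 * exp 2 / (exp 2 + 1) ^ 2 + 2) * t + 4 * (exp 2 - 1) / (exp 2 + 1) ^ 2 + 6
        + (exp (2 * t - 2) - exp (6 - 2 * t)) / (exp 2 + 1) ^ 2)
    (c₂ : ℝ → ℝ) (hc₂ : c₂ = fun t =>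
      (2 * t * (3 * exp 4 + 10 * exp 2 + 3) + 2 * (exp (6 - 2 * t) - exp (2 * t - 2))
        - 17 * exp 4 - 44 * exp 2 - 7) / (2 * (exp 2 + 1) ^ 2)) :
    ∀ t ∈ Set.Icc (1 : ℝ) 2, ∃ D : ℝ,
      HasDerivAt (fun τ => η₂ τ * 1 + c₂ τ) D t ∧
      D - ((1 : ℝ) ^ 2 + (0 : ℝ) ^ 2) + η₂ t * 1 * 0 = 0 := by
  intro t _
  have hη : η₂ = hjSlope := hη₂
  have hc : c₂ = hjOffset := hc₂
  subst hη hc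
  refine ⟨1, ?_, by norm_num⟩
  simpa only [mul_one] using hasDerivAt_hjSlope_add_hjOffset t
end

section
/- For each t ∈ [0,1], S(t,x) = η₁(t)x + c₁(t) with η₁(t) = -2t + 5 + 2(e²-1)/(e²+1)² and c₁(t) = (2t(3e⁴+4e²+3) + e^{2t} - e^{4-2t} - 15e⁴ - 32e² - 9)/(2(e²+1)²) satisfies ∂₁S(t, 1) - (1 + u₁*(t)²) = 0, where u₁*(t) = (e^t - e^{2-t})/(e²+1). -/
/-!
Differentiating, `∂ₜS(t, 1) = -2 + (3e⁴ + 4e² + 3 + e^{2t} + e^{4-2t}) / (e² + 1)²`, and since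
`eᵗ · e^{2-t} = e²`, `1 + u₁(t)² = 1 + (e^{2t} - 2e² + e^{4-2t}) / (e² + 1)²`. The exponentials cancel
and the difference is `-3 + (3e⁴ + 6e² + 3) / (e² + 1)² = 0`.
-/

open Real

lemma hasDerivAt_exp_const_sub_mul (a b t : ℝ) :
    HasDerivAt (fun τ => exp (a - b * τ)) (-b * exp (a - b * t)) t := by
  simpa [mul_comm] using (((hasDerivAt_id t).const_mul b).const_sub a).exp

lemma sq_exp_sub_exp_sub (a t : ℝ) :
    (exp t - exp (a - t)) ^ 2 = exp (2 * t) - 2 * exp a + exp (2 * a - 2 * t) := by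
  have hprod : exp t * exp (a - t) = exp a := by rw [← exp_add, add_sub_cancel]
  rw [show 2 * a - 2 * t = (a - t) + (a - t) by ring, two_mul, exp_add, exp_add]
  linear_combination (-2) * hprod

open Real in
theorem HJ_equation_on_0_1
    (η₁ : ℝ → ℝ) (hη₁ : η₁ = fun t => -2 * t + 5 + 2 * (exp 2 - 1) / (exp 2 + 1) ^ 2)
    (c₁ : ℝ → ℝ) (hc₁ : c₁ = fun t =>
      (2 * t * (3 * exp 4 + 4 * exp 2 + 3) + exp (2 * t) - exp (4 - 2 * t)
        - 15 * exp 4 - 32 * exp 2 - 9) / (2 * (exp 2 + 1) ^ 2))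
    (u₁ : ℝ → ℝ) (hu₁ : u₁ = fun t => (exp t - exp (2 - t)) / (exp 2 + 1)) :
    ∀ t ∈ Set.Icc (0 : ℝ) 1, ∃ D : ℝ,
      HasDerivAt (fun τ => η₁ τ * 1 + c₁ τ) D t ∧
      D - (1 + (u₁ t) ^ 2) = 0 := by
  subst hη₁ hc₁ hu₁
  intro t _
  have hη : HasDerivAt (fun τ => -2 * τ + (5 + 2 * (exp 2 - 1) / (exp 2 + 1) ^ 2)) (-2) t := by
    simpa using ((hasDerivAt_id t).const_mul (-2)).add_const (5 + 2 * (exp 2 - 1) / (exp 2 + 1) ^ 2)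
  have hexp₂ : HasDerivAt (fun τ => exp (2 * τ)) (2 * exp (2 * t)) t := by
    simpa using hasDerivAt_exp_const_sub_mul 0 (-2) t
  have hnum := (((((hasDerivAt_id t).const_mul 2).mul_const (3 * exp 4 + 4 * exp 2 + 3)).fun_add
    hexp₂).fun_sub (hasDerivAt_exp_const_sub_mul 4 2 t)).sub_const (15 * exp 4) |>.sub_const
      (32 * exp 2) |>.sub_const 9
  have hS := hη.fun_add (hnum.div_const (2 * (exp 2 + 1) ^ 2))
  refine ⟨_, by simpa only [mul_one, id, add_assoc] using hS, ?_⟩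
  have hexp₄ : exp 4 = exp 2 ^ 2 := by rw [← exp_nat_mul]; norm_num
  rw [div_pow, sq_exp_sub_exp_sub, show (2 : ℝ) * 2 = 4 by norm_num, hexp₄]
  field_simp
  ring
end

section
/- The cost of the candidate pair for the delayed nonlinear problem equals ∫₀³ (x*(t)² + u*(t)²) dt = -S(0, 1) = -(η₁(0)·1 + c₁(0)), where η₁(0) = 5 + 2(e²-1)/(e²+1)² and c₁(0) = (1 - e⁴ - 15e⁴ - 32e² - 9)/(2(e²+1)²), with x*(t) = 1 on [0,2], x*(t) = (e^{t-2}+e^{4-t})/(e²+1) on [2,3], u*(t) = (e^t-e^{2-t})/(e²+1) on [0,1], and u*(t) = 0 on [1,3]. -/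
/-!
The state is `1` on `[0, 2]` and the control is `0` on `[1, 3]`; on the remaining pieces each is a
multiple of `exp (t - p) + s * exp (q - t)`, whose square has the elementary antiderivative
`exp (2 (t - p)) / 2 + 2 s exp (q - p) t - s² exp (2 (q - t)) / 2`. Splitting the cost at the
switching times thus reduces it to a rational expression in `exp 2`, using `exp 4 = (exp 2)²`.
-/

open Real Set MeasureTheory intervalIntegral
open scoped Interval

section Piecewise

variable {E : Type*} {f g : ℝ → E} {a b c : ℝ}

theorem eqOn_ite_le_left (hac : a ≤ c) :
    EqOn (fun t => if t ≤ c then f t else g t) f (Ι a c) := fun t ht => by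
  rw [uIoc_of_le hac] at ht
  simp [ht.2]

theorem eqOn_ite_le_right (hcb : c ≤ b) :
    EqOn (fun t => if t ≤ c then f t else g t) g (Ι c b) := fun t ht => by
  rw [uIoc_of_le hcb] at ht
  simp [not_le.mpr ht.1]

theorem intervalIntegrable_ite_le [NormedAddCommGroup E] (hac : a ≤ c) (hcb : c ≤ b)
    (hf : IntervalIntegrable f volume a c) (hg : IntervalIntegrable g volume c b) :
    IntervalIntegrable (fun t => if t ≤ c then f t else g t) volume a b :=
  ((intervalIntegrable_congr (eqOn_ite_le_left hac)).2 hf).trans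
    ((intervalIntegrable_congr (eqOn_ite_le_right hcb)).2 hg)

theorem integral_ite_le [NormedAddCommGroup E] [NormedSpace ℝ E] (hac : a ≤ c) (hcb : c ≤ b)
    (hf : IntervalIntegrable f volume a c) (hg : IntervalIntegrable g volume c b) :
    ∫ t in a..b, (if t ≤ c then f t else g t) = (∫ t in a..c, f t) + ∫ t in c..b, g t := by
  rw [← integral_add_adjacent_intervals
      ((intervalIntegrable_congr (eqOn_ite_le_left hac)).2 hf)
      ((intervalIntegrable_congr (eqOn_ite_le_right hcb)).2 hg),
    integral_congr_ae (ae_of_all _ (eqOn_ite_le_left hac)),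
    integral_congr_ae (ae_of_all _ (eqOn_ite_le_right hcb))]

end Piecewise

theorem hasDerivAt_exp_add_mul_exp_sq_antideriv (p q s t : ℝ) :
    HasDerivAt
      (fun t => exp (2 * (t - p)) / 2 + 2 * s * exp (q - p) * t - s ^ 2 * exp (2 * (q - t)) / 2)
      ((exp (t - p) + s * exp (q - t)) ^ 2) t := by
  have h₁ : HasDerivAt (fun t => exp (2 * (t - p))) (exp (2 * (t - p)) * 2) t := by
    simpa using (((hasDerivAt_id t).sub_const p).const_mul 2).exp
  have h₂ : HasDerivAt (fun t => exp (2 * (q - t))) (exp (2 * (q - t)) * -2) t := by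
    simpa using (((hasDerivAt_id t).const_sub q).const_mul 2).exp
  refine (((h₁.div_const 2).add ((hasDerivAt_id' t).const_mul (2 * s * exp (q - p)))).sub
    ((h₂.const_mul (s ^ 2)).div_const 2)).congr_deriv ?_
  rw [show 2 * (t - p) = (t - p) + (t - p) by ring, show 2 * (q - t) = (q - t) + (q - t) by ring,
    show q - p = (t - p) + (q - t) by ring, exp_add, exp_add, exp_add]
  ring

theorem integral_exp_add_mul_exp_sq (a b p q s : ℝ) :
    ∫ t in a..b, (exp (t - p) + s * exp (q - t)) ^ 2 =
      (exp (2 * (b - p)) - exp (2 * (a - p))) / 2 + 2 * s * exp (q - p) * (b - a)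
        - s ^ 2 * (exp (2 * (q - b)) - exp (2 * (q - a))) / 2 := by
  rw [integral_eq_sub_of_hasDerivAt (fun t _ => hasDerivAt_exp_add_mul_exp_sq_antideriv p q s t)
    (Continuous.intervalIntegrable (by fun_prop) a b)]
  ring

open Real in
theorem cost_equals_neg_S :
    (∫ t in (0:ℝ)..3,
      ((if t ≤ 2 then (1:ℝ) else (exp (t - 2) + exp (4 - t)) / (exp 2 + 1)) ^ 2
        + (if t ≤ 1 then (exp t - exp (2 - t)) / (exp 2 + 1) else (0:ℝ)) ^ 2))
    = -((5 + 2 * (exp 2 - 1) / (exp 2 + 1) ^ 2) * 1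
        + (1 - exp 4 - 15 * exp 4 - 32 * exp 2 - 9) / (2 * (exp 2 + 1) ^ 2)) := by
  have hstate : IntervalIntegrable
      (fun t => if t ≤ 2 then (1:ℝ) else ((exp (t - 2) + exp (4 - t)) / (exp 2 + 1)) ^ 2)
      volume 0 3 :=
    intervalIntegrable_ite_le (by norm_num) (by norm_num) intervalIntegrable_const
      (Continuous.intervalIntegrable (by fun_prop) _ _)
  have hcontrol : IntervalIntegrable
      (fun t => if t ≤ 1 then ((exp t - exp (2 - t)) / (exp 2 + 1)) ^ 2 else (0:ℝ))
      volume 0 3 :=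
    intervalIntegrable_ite_le (by norm_num) (by norm_num)
      (Continuous.intervalIntegrable (by fun_prop) _ _) intervalIntegrable_const
  have hx_tail := integral_exp_add_mul_exp_sq 2 3 2 4 1
  have hu_head := integral_exp_add_mul_exp_sq 0 1 0 2 (-1)
  simp only [one_mul, sub_zero, neg_one_mul, ← sub_eq_add_neg] at hx_tail hu_head
  simp only [ite_pow, one_pow, zero_pow two_ne_zero]
  rw [integral_add hstate hcontrol,
    integral_ite_le (by norm_num) (by norm_num) intervalIntegrable_const
      (Continuous.intervalIntegrable (by fun_prop) _ _),
    integral_ite_le (by norm_num) (by norm_num)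
      (Continuous.intervalIntegrable (by fun_prop) _ _) intervalIntegrable_const]
  simp only [div_pow, intervalIntegral.integral_div, hx_tail, hu_head,
    intervalIntegral.integral_const, intervalIntegral.integral_zero]
  norm_num
  rw [show exp 4 = exp 2 ^ 2 by rw [← exp_nat_mul]; norm_num]
  field_simp
  ring
end
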